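/- Let v, u, u' be three distinct points in the plane in general position with pairwise distances at most r. If u ⪯_v u', then it is not the case that u ⪯_{u'} v. -/

import Mathlib

open Metric

noncomputable section

/-- Points of the plane. -/
abbrev Pt := EuclideanSpace ℝ (Fin 2)

/-- `Zd r p` : the closed disk (communication zone) of radius `r` centered at `p`. -/
def Zd (r : ℝ) (p : Pt) : Set Pt := Metric.closedBall p r

/-- `Zb r p` : the boundary circle of the communication zone of `p`. -/
def Zb (r : ℝ) (p : Pt) : Set Pt := Metric.sphere p r

/-- The arc-containment relation `a ⪯_v b`. -/
def arcLe (r : ℝ) (v a b : Pt) : Prop := Zd r a ∩ Zb r v ⊆ Zd r b ∩ Zb r v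

/-- `u` is a neighbor of `v`. -/
def Nbr (r : ℝ) (v u : Pt) : Prop := u ≠ v ∧ dist u v ≤ r

/-- General position: no three distinct points of `V` are collinear. -/
def GenPos (V : Set Pt) : Prop :=
  ∀ a ∈ V, ∀ b ∈ V, ∀ c ∈ V, a ≠ b → a ≠ c → b ≠ c → ¬ Collinear ℝ ({a, b, c} : Set Pt)

/-- `u` is a maximal neighbor of `v` within `V`. -/
def MaxNbr (V : Set Pt) (r : ℝ) (v u : Pt) : Prop :=
  u ∈ V ∧ Nbr r v u ∧ ∀ u' ∈ V, u' ≠ u → Nbr r v u' → ¬ arcLe r v u u'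

/-- `v` is an interior node of `V`. -/
def IsInterior (V : Set Pt) (r : ℝ) (v : Pt) : Prop :=
  ∀ z ∈ Zb r v, ∃ v' ∈ V, v' ≠ v ∧ z ∈ Zd r v'

/-- Counterclockwise rotation by `π/2`. -/
def rot90 (x : Pt) : Pt := (WithLp.equiv 2 (Fin 2 → ℝ)).symm ![-(x 1), x 0]

/-- The boundary intersection `CCW(v, v')` of the circles `∂Z(v)` and `∂Z(v')`:
traversing from `CCW(v,v')` to `CW(v,v')` clockwise along `∂Z(v)` sweeps an angle `< π`. -/
def ccwPt (r : ℝ) (v v' : Pt) : Pt :=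
  midpoint ℝ v v' + (Real.sqrt (r ^ 2 - (dist v v' / 2) ^ 2) / dist v v') • rot90 (v' - v)

/-- The boundary intersection `CW(v, v')`. -/
def cwPt (r : ℝ) (v v' : Pt) : Pt :=
  midpoint ℝ v v' - (Real.sqrt (r ^ 2 - (dist v v' / 2) ^ 2) / dist v v') • rot90 (v' - v)

/-- A communication wheel of `v` with `m` rim nodes `w 0, …, w (m-1)` (indices mod `m`). -/
def IsCommWheel (V : Set Pt) (r : ℝ) (v : Pt) (m : ℕ) (w : ZMod m → Pt) : Prop :=
  3 ≤ m ∧ Function.Injective w ∧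
  (∀ i, MaxNbr V r v (w i)) ∧
  (∀ i, dist (w i) (w (i + 1)) ≤ r) ∧
  (∀ i, ccwPt r v (w i) ∈ Zd r (w (i + 1)) ∧ cwPt r v (w i) ∈ Zd r (w (i - 1)))

/-! If `u ⪯_v u'`, both points of `∂Z(v) ∩ ∂Z(u)` lie in `Z(u')`. They are `m ± h` with `m` the
midpoint of `v u` and `h ⟂ u - v`, `‖h‖² = r² - (|vu|/2)²`, so the parallelogram law puts `u'`
within `|vu|/2` of `m`: the angle of the triangle `v u u'` at `u'` is at least `π/2`.
Symmetrically, `u ⪯_{u'} v` makes the angle at `v` at least `π/2`, which is impossible since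
`⟪u' - v, u' - u⟫ + ⟪v - u', v - u⟫ = ‖u' - v‖²`. -/

open RealInnerProductSpace

section InnerProductSpace

variable {E : Type*} [NormedAddCommGroup E] [InnerProductSpace ℝ E]

theorem inner_sub_sub_eq_dist_midpoint_sq (a b c : E) :
    ⟪c - a, c - b⟫ = dist c (midpoint ℝ a b) ^ 2 - (dist a b / 2) ^ 2 := by
  rw [dist_eq_norm, dist_eq_norm, midpoint_eq_smul_add, invOf_eq_inv, div_pow,
    ← real_inner_self_eq_norm_sq, ← real_inner_self_eq_norm_sq]
  simp only [inner_sub_left, inner_sub_right, inner_add_left, inner_add_right,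
    real_inner_smul_left, real_inner_smul_right]
  rw [real_inner_comm a b, real_inner_comm a c, real_inner_comm b c]
  ring

theorem dist_add_sq_of_inner_eq_zero {m h c : E} (horth : ⟪m - c, h⟫ = 0) :
    dist (m + h) c ^ 2 = dist m c ^ 2 + ‖h‖ ^ 2 := by
  rw [dist_eq_norm, dist_eq_norm, show m + h - c = m - c + h by abel, sq, sq, sq,
    norm_add_sq_eq_norm_sq_add_norm_sq_real horth]

theorem midpoint_add_mem_sphere_inter {a b h : E} {r : ℝ} (hr : 0 ≤ r) (horth : ⟪b - a, h⟫ = 0)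
    (hh : ‖h‖ ^ 2 = r ^ 2 - (dist a b / 2) ^ 2) :
    midpoint ℝ a b + h ∈ sphere a r ∩ sphere b r := by
  have hdist : ∀ c, ⟪midpoint ℝ a b - c, h⟫ = 0 → dist (midpoint ℝ a b) c = dist a b / 2 →
      dist (midpoint ℝ a b + h) c = r := by
    intro c hc hmc
    rw [← pow_left_inj₀ dist_nonneg hr two_ne_zero, dist_add_sq_of_inner_eq_zero hc, hmc, hh]
    ring
  constructor
  · refine hdist a ?_ ?_
    · rw [midpoint_sub_left, real_inner_smul_left, horth, mul_zero]
    · rw [dist_midpoint_left (𝕜 := ℝ), Real.norm_two, inv_mul_eq_div]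
  · refine hdist b ?_ ?_
    · rw [midpoint_sub_right, ← neg_sub, smul_neg, inner_neg_left, real_inner_smul_left, horth,
        mul_zero, neg_zero]
    · rw [dist_midpoint_right (𝕜 := ℝ), Real.norm_two, inv_mul_eq_div]

theorem dist_sq_add_norm_sq_le_of_dist_add_le_of_dist_sub_le {m h c : E} {r : ℝ}
    (hplus : dist (m + h) c ≤ r) (hminus : dist (m - h) c ≤ r) :
    dist m c ^ 2 + ‖h‖ ^ 2 ≤ r ^ 2 := by
  have hpar := parallelogram_law_with_norm ℝ (m - c) h
  rw [dist_eq_norm] at hplus hminus ⊢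
  rw [show m + h - c = m - c + h by abel] at hplus
  rw [show m - h - c = m - c - h by abel] at hminus
  nlinarith [norm_nonneg (m - c + h), norm_nonneg (m - c - h)]

end InnerProductSpace

theorem inner_rot90_self (x : Pt) : ⟪x, rot90 x⟫ = 0 := by
  simp only [rot90, WithLp.equiv_symm_apply, PiLp.inner_apply, RCLike.inner_apply,
    Real.ringHom_apply, Fin.sum_univ_two, Matrix.cons_val_zero, Matrix.cons_val_one,
    Matrix.cons_val_fin_one]
  ring

theorem norm_rot90 (x : Pt) : ‖rot90 x‖ = ‖x‖ := by
  simp only [rot90, WithLp.equiv_symm_apply, EuclideanSpace.norm_eq, Real.norm_eq_abs, sq_abs,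
    Fin.sum_univ_two, Matrix.cons_val_zero, Matrix.cons_val_one, Matrix.cons_val_fin_one,
    even_two, Even.neg_pow]
  ring_nf

def chordOffset (r : ℝ) (v v' : Pt) : Pt :=
  (Real.sqrt (r ^ 2 - (dist v v' / 2) ^ 2) / dist v v') • rot90 (v' - v)

theorem ccwPt_eq_midpoint_add (r : ℝ) (v v' : Pt) :
    ccwPt r v v' = midpoint ℝ v v' + chordOffset r v v' := rfl

theorem cwPt_eq_midpoint_sub (r : ℝ) (v v' : Pt) :
    cwPt r v v' = midpoint ℝ v v' - chordOffset r v v' := rfl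

theorem inner_sub_chordOffset (r : ℝ) (v v' : Pt) : ⟪v' - v, chordOffset r v v'⟫ = 0 := by
  rw [chordOffset, real_inner_smul_right, inner_rot90_self, mul_zero]

theorem norm_chordOffset_sq {r : ℝ} {v v' : Pt} (hne : v ≠ v') (hd : dist v v' ≤ 2 * r) :
    ‖chordOffset r v v'‖ ^ 2 = r ^ 2 - (dist v v' / 2) ^ 2 := by
  have hpos : 0 < dist v v' := dist_pos.2 hne
  have hrad : 0 ≤ r ^ 2 - (dist v v' / 2) ^ 2 := by nlinarith
  rw [chordOffset, norm_smul, norm_rot90, norm_sub_rev, ← dist_eq_norm, mul_pow, Real.norm_eq_abs,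
    sq_abs, div_pow, Real.sq_sqrt hrad]
  field_simp

theorem ccwPt_mem_Zd_inter_Zb {r : ℝ} {v v' : Pt} (hne : v ≠ v') (hd : dist v v' ≤ 2 * r) :
    ccwPt r v v' ∈ Zd r v' ∩ Zb r v := by
  obtain ⟨hv, hv'⟩ := midpoint_add_mem_sphere_inter (by linarith [dist_nonneg (x := v) (y := v')])
    (inner_sub_chordOffset r v v') (norm_chordOffset_sq hne hd)
  rw [ccwPt_eq_midpoint_add]
  exact ⟨sphere_subset_closedBall hv', hv⟩

theorem cwPt_mem_Zd_inter_Zb {r : ℝ} {v v' : Pt} (hne : v ≠ v') (hd : dist v v' ≤ 2 * r) :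
    cwPt r v v' ∈ Zd r v' ∩ Zb r v := by
  obtain ⟨hv, hv'⟩ := midpoint_add_mem_sphere_inter (h := -chordOffset r v v')
    (by linarith [dist_nonneg (x := v) (y := v')])
    (by rw [inner_neg_right, inner_sub_chordOffset, neg_zero])
    (by rw [norm_neg, norm_chordOffset_sq hne hd])
  rw [cwPt_eq_midpoint_sub, sub_eq_add_neg]
  exact ⟨sphere_subset_closedBall hv', hv⟩

theorem inner_sub_sub_nonpos_of_arcLe {r : ℝ} {v u u' : Pt} (hvu : v ≠ u) (hd : dist v u ≤ 2 * r)
    (hle : arcLe r v u u') : ⟪u' - v, u' - u⟫ ≤ 0 := by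
  have hccw : dist (midpoint ℝ v u + chordOffset r v u) u' ≤ r :=
    (hle (ccwPt_mem_Zd_inter_Zb hvu hd)).1
  have hcw : dist (midpoint ℝ v u - chordOffset r v u) u' ≤ r :=
    (hle (cwPt_mem_Zd_inter_Zb hvu hd)).1
  have hmid := dist_sq_add_norm_sq_le_of_dist_add_le_of_dist_sub_le hccw hcw
  rw [norm_chordOffset_sq hvu hd, dist_comm] at hmid
  rw [inner_sub_sub_eq_dist_midpoint_sq]
  linarith

theorem stmt_2_general (r : ℝ) (v u u' : Pt)
    (hvu : v ≠ u) (hvu' : v ≠ u') (huu' : u ≠ u')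
    (h1 : dist v u ≤ r) (h3 : dist u u' ≤ r)
    (hle : arcLe r v u u') :
    ¬ arcLe r u' u v := by
  intro hle'
  have hr : 0 ≤ r := dist_nonneg.trans h1
  have hobtuse_u' := inner_sub_sub_nonpos_of_arcLe hvu (by linarith) hle
  have hobtuse_v := inner_sub_sub_nonpos_of_arcLe huu'.symm (by rw [dist_comm]; linarith) hle'
  have hsum : ‖u' - v‖ ^ 2 = ⟪u' - v, u' - u⟫ + ⟪v - u', v - u⟫ := by
    rw [← real_inner_self_eq_norm_sq]
    simp only [inner_sub_left, inner_sub_right, real_inner_comm]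
    ring
  have hzero : ‖u' - v‖ = 0 := by nlinarith [norm_nonneg (u' - v)]
  exact hvu' (sub_eq_zero.1 (norm_eq_zero.1 hzero)).symm

/-- Lemma: `u ⪯_v u'` implies `¬ (u ⪯_{u'} v)`. -/
theorem stmt_2 (r : ℝ) (hr : 0 < r) (v u u' : Pt)
    (hvu : v ≠ u) (hvu' : v ≠ u') (huu' : u ≠ u')
    (hcol : ¬ Collinear ℝ ({v, u, u'} : Set Pt))
    (h1 : dist v u ≤ r) (h2 : dist v u' ≤ r) (h3 : dist u u' ≤ r)
    (hle : arcLe r v u u') :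
    ¬ arcLe r u' u v :=
  stmt_2_general r v u u' hvu hvu' huu' h1 h3 hle
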